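/- Let w(ζ) = −(ζ + c)/(2πi) for some c ∈ ℂ, let Γ_1, …, Γ_n ∈ ℝ \ {0} (n ≥ 2), and let z = (z_1, …, z_n) and z′ = (z′_1, …, z′_n) be tuples of pairwise distinct complex numbers. If a ∈ ℂ \ {0} and b ∈ ℂ satisfy a·V_{z′}(aζ + b) = V_z(ζ) for every ζ ∈ ℂ \ {z_1, …, z_n} such that aζ + b ∉ {z′_1, …, z′_n}, then (a, b) = (1, 0) or (a, b) = (−1, −2c). -/
import Mathlib

open Filter Bornology Topology

private theorem lin_cobounded (u w : ℂ) (hu : u ≠ 0) :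
    Tendsto (fun k : ℕ => u * (k : ℂ) + w) atTop (cobounded ℂ) := by
  rw [← tendsto_norm_atTop_iff_cobounded]
  apply tendsto_atTop_mono (f := fun k : ℕ => ‖u‖ * (k : ℕ) - ‖w‖)
  · intro k
    have h1 : ‖u * (k:ℂ)‖ ≤ ‖u * (k:ℂ) + w‖ + ‖w‖ := by
      have h2 : ‖u * (k:ℂ)‖ = ‖(u * (k:ℂ) + w) - w‖ := by ring_nf
      rw [h2]; exact norm_sub_le _ _
    have h3 : ‖u * (k:ℂ)‖ = ‖u‖ * (k:ℕ) := by
      rw [norm_mul, Complex.norm_natCast]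
    linarith
  · apply tendsto_atTop_add_const_right
    exact (tendsto_natCast_atTop_atTop (R := ℝ)).const_mul_atTop (norm_pos_iff.2 hu)

private theorem term_to_zero (u w g : ℂ) (hu : u ≠ 0) :
    Tendsto (fun k : ℕ => g / (u * (k : ℂ) + w)) atTop (𝓝 0) := by
  have h := (tendsto_inv₀_cobounded.comp (lin_cobounded u w hu)).const_mul g
  simpa [div_eq_mul_inv, Function.comp] using h

private theorem ev_ne (u w v : ℂ) (hu : u ≠ 0) :
    ∀ᶠ k : ℕ in atTop, u * (k : ℂ) + w ≠ v := by
  have := (tendsto_norm_atTop_iff_cobounded.2 (lin_cobounded u w hu)).eventually_gt_atTop ‖v‖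
  filter_upwards [this] with k hk
  intro hcontra; rw [hcontra] at hk; exact lt_irrefl _ hk

/-- The complex velocity of the flow generated by `n` vortices with
circulations `Γ_1, …, Γ_n` in the degree-one background flow
`w(ζ) = −(ζ + c)/(2πi)`. -/
noncomputable def velDegOne (n : ℕ) (Γ : Fin n → ℝ) (c : ℂ)
    (z : Fin n → ℂ) (ζ : ℂ) : ℂ :=
  (1 / (2 * (Real.pi : ℂ) * Complex.I)) * ∑ j, (Γ j : ℂ) / (ζ - z j)
    + (-(ζ + c) / (2 * (Real.pi : ℂ) * Complex.I))

/-- for a degree-one background flow `w(ζ) = −(ζ + c)/(2πi)`, if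
`a ≠ 0` and `b` satisfy `a·V_{z′}(aζ + b) = V_z(ζ)` wherever both sides are
defined, then `(a, b) = (1, 0)` or `(a, b) = (−1, −2c)`. -/
theorem degree_one_equivalence_rigidity
    (n : ℕ) (hn : 2 ≤ n) (c : ℂ) (Γ : Fin n → ℝ) (hΓ : ∀ j, Γ j ≠ 0)
    (z z' : Fin n → ℂ)
    (hz : ∀ i j, i ≠ j → z i ≠ z j) (hz' : ∀ i j, i ≠ j → z' i ≠ z' j)
    (a : ℂ) (ha : a ≠ 0) (b : ℂ)
    (h : ∀ ζ : ℂ, (∀ j, ζ ≠ z j) → (∀ j, a * ζ + b ≠ z' j) →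
      a * velDegOne n Γ c z' (a * ζ + b) = velDegOne n Γ c z ζ) :
    (a = 1 ∧ b = 0) ∨ (a = -1 ∧ b = -2 * c) := by
  set P : ℂ := 2 * (Real.pi : ℂ) * Complex.I with hP
  have hPne : P ≠ 0 := by
    simp [hP, Real.pi_ne_zero, Complex.I_ne_zero, Complex.ofReal_ne_zero]
  set d : ℂ := a * b + a * c - c with hd
  -- the function that will equal (a²−1)ζ + d on a cofinite set of naturals
  set F : ℕ → ℂ := fun k =>
    a * ∑ j, (Γ j : ℂ) / ((a * (k : ℂ) + b) - z' j)
      - ∑ j, (Γ j : ℂ) / ((k : ℂ) - z j) with hF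
  -- eventual identity
  have hev : ∀ᶠ k : ℕ in atTop, F k = (a ^ 2 - 1) * (k : ℂ) + d := by
    have h1 : ∀ᶠ k : ℕ in atTop, ∀ j, (k : ℂ) ≠ z j := by
      rw [eventually_all]
      intro j
      simpa using ev_ne 1 0 (z j) one_ne_zero
    have h2 : ∀ᶠ k : ℕ in atTop, ∀ j, a * (k : ℂ) + b ≠ z' j := by
      rw [eventually_all]
      intro j
      exact ev_ne a b (z' j) ha
    filter_upwards [h1, h2] with k hk1 hk2
    have := h (k : ℂ) hk1 hk2
    unfold velDegOne at this
    rw [hF, hd]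
    field_simp at this ⊢
    linear_combination this
  -- F tends to 0
  have hF0 : Tendsto F atTop (𝓝 0) := by
    have hA : Tendsto (fun k : ℕ => ∑ j, (Γ j : ℂ) / ((a * (k : ℂ) + b) - z' j))
        atTop (𝓝 0) := by
      have := tendsto_finset_sum (Finset.univ : Finset (Fin n))
        (f := fun j (k : ℕ) => (Γ j : ℂ) / ((a * (k : ℂ) + b) - z' j))
        (fun j _ => by
          simpa [sub_eq_add_neg, add_assoc] using term_to_zero a (b - z' j) (Γ j : ℂ) ha)
      simpa using this
    have hB : Tendsto (fun k : ℕ => ∑ j, (Γ j : ℂ) / ((k : ℂ) - z j))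
        atTop (𝓝 0) := by
      have := tendsto_finset_sum (Finset.univ : Finset (Fin n))
        (f := fun j (k : ℕ) => (Γ j : ℂ) / ((k : ℂ) - z j))
        (fun j _ => by
          simpa [sub_eq_add_neg] using term_to_zero 1 (-z j) (Γ j : ℂ) one_ne_zero)
      simpa using this
    have := (hA.const_mul a).sub hB
    simpa using this
  -- so G k = (a²−1) k + d tends to 0
  have hG0 : Tendsto (fun k : ℕ => (a ^ 2 - 1) * (k : ℂ) + d) atTop (𝓝 0) :=
    hF0.congr' hev
  -- differences tend to 0, hence a² = 1
  have hdiff : Tendsto (fun k : ℕ =>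
      ((a ^ 2 - 1) * ((k + 1 : ℕ) : ℂ) + d) - ((a ^ 2 - 1) * (k : ℂ) + d))
      atTop (𝓝 0) := by
    have hshift : Tendsto (fun k : ℕ => (a ^ 2 - 1) * ((k + 1 : ℕ) : ℂ) + d)
        atTop (𝓝 0) := hG0.comp (tendsto_add_atTop_nat 1)
    simpa using hshift.sub hG0
  have ha2 : a ^ 2 = 1 := by
    have hconst : Tendsto (fun _ : ℕ => a ^ 2 - 1) atTop (𝓝 0) := by
      apply hdiff.congr
      intro k
      push_cast
      ring
    have := tendsto_nhds_unique tendsto_const_nhds hconst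
    linear_combination this
  have hd0 : d = 0 := by
    have hconst : Tendsto (fun _ : ℕ => d) atTop (𝓝 0) := by
      apply hG0.congr
      intro k
      rw [ha2]
      ring
    exact tendsto_nhds_unique tendsto_const_nhds hconst
  -- conclude
  have hfact : (a - 1) * (a + 1) = 0 := by linear_combination ha2
  rcases mul_eq_zero.1 hfact with h1 | h1
  · left
    have ha1 : a = 1 := by linear_combination h1
    have hd0' : a * b + a * c - c = 0 := by rw [← hd]; exact hd0
    exact ⟨ha1, by linear_combination hd0' - (b + c) * h1⟩
  · right
    have ha1 : a = -1 := by linear_combination h1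
    have hd0' : a * b + a * c - c = 0 := by rw [← hd]; exact hd0
    exact ⟨ha1, by linear_combination -hd0' + (b + c) * h1⟩
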